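/- arXiv:1701.04385 — 3 statements merged into one kernel-verified Lean document; each statement's English description precedes it below -/
import Mathlib

section
/- Let (V, E, ends) be a nonempty finite connected multigraph with vertex weights h : V → ℕ, of genus g = #E − #V + 1 + Σ_v h(v), and suppose g ≥ 2 and the graph is stable, i.e. 2h(v) − 2 + deg(v) > 0 for every vertex v. Then #V ≤ 2g − 2 and #E ≤ 3g − 3. -/
/-- The degree of a vertex `v` in a multigraph given by an endpoint map
`ends : E → Sym2 V`: each edge incident to `v` counts once, and a loop at `v`
counts twice. -/
def multigraphDeg {V E : Type*} [Fintype E] [DecidableEq V]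
    (ends : E → Sym2 V) (v : V) : ℕ :=
  ∑ e : E, (if v ∈ ends e then (if (ends e).IsDiag then 2 else 1) else 0)

/-- A multigraph is connected if any two vertices are related by the
reflexive-transitive closure of the edge relation. -/
def MultigraphConnected {V E : Type*} (ends : E → Sym2 V) : Prop :=
  ∀ u v : V, Relation.ReflTransGen (fun a b => ∃ e : E, ends e = s(a, b)) u v

/-!
Summing the stability condition `1 ≤ 2h(v) − 2 + deg(v)` over all vertices and using the
handshake identity `Σ deg(v) = 2#E` gives `#V ≤ 2(#E − #V + Σ h(v)) = 2g − 2`.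
The edge bound follows, since `#E = g − 1 + #V − Σ h(v) ≤ g − 1 + #V`.
-/

theorem Sym2.sum_incidence_eq_two {V : Type*} [Fintype V] [DecidableEq V] (s : Sym2 V) :
    ∑ v : V, (if v ∈ s then (if s.IsDiag then 2 else 1) else 0) = 2 := by
  induction s using Sym2.ind with
  | h a b =>
    by_cases hab : a = b
    · subst hab
      simp
    · have hsplit : ∀ v : V, (if v ∈ s(a, b) then (if s(a, b).IsDiag then 2 else 1) else 0)
          = (if v = a then 1 else 0) + (if v = b then 1 else 0) := by
        intro v
        by_cases hva : v = a <;> by_cases hvb : v = b <;> simp_all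
      simp only [hsplit, Finset.sum_add_distrib, Finset.sum_ite_eq', Finset.mem_univ, if_true]

theorem sum_multigraphDeg {V E : Type*} [Fintype V] [Fintype E] [DecidableEq V]
    (ends : E → Sym2 V) :
    ∑ v : V, multigraphDeg ends v = 2 * Fintype.card E := by
  simp only [multigraphDeg]
  rw [Finset.sum_comm]
  simp [Sym2.sum_incidence_eq_two, mul_comm]

theorem sum_stabilityExcess {V E : Type*} [Fintype V] [Fintype E] [DecidableEq V]
    (ends : E → Sym2 V) (h : V → ℕ) :
    ∑ v : V, (2 * (h v : ℤ) - 2 + (multigraphDeg ends v : ℤ)) =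
      2 * ((Fintype.card E : ℤ) - (Fintype.card V : ℤ) + 1 + ∑ v : V, (h v : ℤ)) - 2 := by
  have hdeg : ∑ v : V, (multigraphDeg ends v : ℤ) = 2 * (Fintype.card E : ℤ) := by
    exact_mod_cast sum_multigraphDeg ends
  rw [Finset.sum_add_distrib, Finset.sum_sub_distrib, ← Finset.mul_sum, hdeg]
  simp only [Finset.sum_const, Finset.card_univ, nsmul_eq_mul]
  ring

theorem stable_graph_vertex_edge_bounds_general {V E : Type*} [Fintype V] [Fintype E]
    [DecidableEq V]
    (ends : E → Sym2 V) (h : V → ℕ) (g : ℤ)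
    (hg : g = (Fintype.card E : ℤ) - (Fintype.card V : ℤ) + 1 + ∑ v : V, (h v : ℤ))
    (hstable : ∀ v : V, 0 < 2 * (h v : ℤ) - 2 + (multigraphDeg ends v : ℤ)) :
    (Fintype.card V : ℤ) ≤ 2 * g - 2 ∧ (Fintype.card E : ℤ) ≤ 3 * g - 3 := by
  have hV : (Fintype.card V : ℤ) ≤ 2 * g - 2 :=
    calc (Fintype.card V : ℤ) = ∑ _v : V, (1 : ℤ) := by simp
      _ ≤ ∑ v : V, (2 * (h v : ℤ) - 2 + (multigraphDeg ends v : ℤ)) :=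
        Finset.sum_le_sum fun v _ => hstable v
      _ = 2 * g - 2 := by rw [sum_stabilityExcess, hg]
  have hweights : 0 ≤ ∑ v : V, (h v : ℤ) := Finset.sum_nonneg fun v _ => Int.natCast_nonneg _
  exact ⟨hV, by linarith⟩

/-- A nonempty connected stable vertex-weighted multigraph of genus `g ≥ 2` has at most
`2g − 2` vertices and at most `3g − 3` edges. -/
theorem stable_graph_vertex_edge_bounds {V E : Type*} [Fintype V] [Fintype E]
    [DecidableEq V] [Nonempty V]
    (ends : E → Sym2 V) (h : V → ℕ) (g : ℤ)
    (hconn : MultigraphConnected ends)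
    (hg : g = (Fintype.card E : ℤ) - (Fintype.card V : ℤ) + 1 + ∑ v : V, (h v : ℤ))
    (hg2 : 2 ≤ g)
    (hstable : ∀ v : V, 0 < 2 * (h v : ℤ) - 2 + (multigraphDeg ends v : ℤ)) :
    (Fintype.card V : ℤ) ≤ 2 * g - 2 ∧ (Fintype.card E : ℤ) ≤ 3 * g - 3 :=
  stable_graph_vertex_edge_bounds_general ends h g hg hstable
end

section
/- For every integer g ≥ 2 there exists a connected multigraph (V, E, ends) with exactly 2g − 2 vertices and 3g − 3 edges in which every vertex has degree exactly 3; equipped with the zero vertex weight function it is a stable graph of genus g. -/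
/-! The graph is a cycle through all `2g − 2` vertices together with the perfect matching
`k ↔ k + (g − 1)`: the cycle contributes degree 2 at every vertex and makes the graph
connected, the matching contributes degree 1, and `3g − 3 − (2g − 2) + 1 = g`.
For `g = 2` this is the theta graph (three parallel edges). -/

open Finset

section Multigraph

variable {V E E' : Type*}

lemma MultigraphConnected.of_comp {ends : E → Sym2 V} (f : E' → E)
    (h : MultigraphConnected (ends ∘ f)) : MultigraphConnected ends :=
  fun u v => Relation.ReflTransGen.mono (fun _ _ ⟨e, he⟩ => ⟨f e, he⟩) _ _ (h u v)

lemma MultigraphConnected.comp_equiv {ends : E → Sym2 V} (h : MultigraphConnected ends)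
    (σ : E' ≃ E) : MultigraphConnected (ends ∘ σ) :=
  MultigraphConnected.of_comp σ.symm (by simpa [Function.comp_assoc] using h)

variable [DecidableEq V] [Fintype E] [Fintype E']

/-- Orienting each edge, a vertex is counted once as a source and once as a target, which
makes a loop count twice. -/
lemma multigraphDeg_mk (src tgt : E → V) (v : V) :
    multigraphDeg (fun e => s(src e, tgt e)) v = #{e | src e = v} + #{e | tgt e = v} := by
  simp only [multigraphDeg, card_filter, ← sum_add_distrib]
  refine sum_congr rfl fun e _ => ?_
  grind [Sym2.mk_isDiag_iff]

lemma multigraphDeg_comp_equiv (ends : E → Sym2 V) (σ : E' ≃ E) (v : V) :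
    multigraphDeg (ends ∘ σ) v = multigraphDeg ends v :=
  σ.sum_comp fun e => if v ∈ ends e then (if (ends e).IsDiag then 2 else 1) else 0

lemma multigraphDeg_sumElim (a : E → Sym2 V) (b : E' → Sym2 V) (v : V) :
    multigraphDeg (Sum.elim a b) v = multigraphDeg a v + multigraphDeg b v :=
  Fintype.sum_sum_type _

end Multigraph

lemma card_filter_equiv_eq {α β : Type*} [Fintype α] [DecidableEq β] (f : α ≃ β) (b : β) :
    #{a | f a = b} = 1 :=
  card_eq_one.mpr ⟨f.symm b, by ext; simp [← Equiv.eq_symm_apply]⟩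

def cycleEnds (n : ℕ) [NeZero n] (i : Fin n) : Sym2 (Fin n) := s(i, i + 1)

def matchingEnds {m n : ℕ} (h : m + m = n) (k : Fin m) : Sym2 (Fin n) :=
  s(Fin.cast h (Fin.castAdd m k), Fin.cast h (Fin.natAdd m k))

def cycleWithMatchingEnds {m n : ℕ} [NeZero n] (h : m + m = n) :
    Fin n ⊕ Fin m → Sym2 (Fin n) :=
  Sum.elim (cycleEnds n) (matchingEnds h)

open Fin.NatCast in
lemma cycleEnds_connected (n : ℕ) [NeZero n] : MultigraphConnected (cycleEnds n) := by
  set R := fun a b : Fin n => ∃ i, cycleEnds n i = s(a, b)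
  have : Std.Symm R := ⟨fun _ _ ⟨i, hi⟩ => ⟨i, hi.trans Sym2.eq_swap⟩⟩
  have from_zero (k : ℕ) : Relation.ReflTransGen R 0 (k : Fin n) := by
    induction k with
    | zero => exact Nat.cast_zero (R := Fin n) ▸ .refl
    | succ k ih => exact ih.tail ⟨k, by simp [cycleEnds]⟩
  intro u v
  rw [← Fin.cast_val_eq_self u, ← Fin.cast_val_eq_self v]
  exact (Std.Symm.symm _ _ (from_zero u)).trans (from_zero v)

lemma multigraphDeg_cycleEnds (n : ℕ) [NeZero n] (v : Fin n) :
    multigraphDeg (cycleEnds n) v = 2 :=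
  (multigraphDeg_mk id (· + 1) v).trans <| congrArg₂ (· + ·)
    (card_filter_equiv_eq (Equiv.refl _) v) (card_filter_equiv_eq (Equiv.addRight 1) v)

lemma multigraphDeg_matchingEnds {m n : ℕ} (h : m + m = n) (v : Fin n) :
    multigraphDeg (matchingEnds h) v = 1 := by
  let σ : Fin m ⊕ Fin m ≃ Fin n := finSumFinEquiv.trans (finCongr h)
  calc multigraphDeg (matchingEnds h) v
      = #{k | σ (.inl k) = v} + #{k | σ (.inr k) = v} := multigraphDeg_mk _ _ v
    _ = #{x | σ x = v} := by simp only [card_filter, Fintype.sum_sum_type]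
    _ = 1 := card_filter_equiv_eq σ v

lemma cycleWithMatchingEnds_connected {m n : ℕ} [NeZero n] (h : m + m = n) :
    MultigraphConnected (cycleWithMatchingEnds h) :=
  .of_comp Sum.inl (cycleEnds_connected n)

lemma multigraphDeg_cycleWithMatchingEnds {m n : ℕ} [NeZero n] (h : m + m = n) (v : Fin n) :
    multigraphDeg (cycleWithMatchingEnds h) v = 3 := by
  rw [cycleWithMatchingEnds, multigraphDeg_sumElim, multigraphDeg_cycleEnds,
    multigraphDeg_matchingEnds]

/-- For every `g ≥ 2` there is a connected multigraph with `2g − 2` vertices and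
`3g − 3` edges all of whose vertices are trivalent; with the zero vertex weight
function it is a stable graph of genus `g`. -/
theorem exists_trivalent_stable_graph (g : ℕ) (hg : 2 ≤ g) :
    ∃ ends : Fin (3 * g - 3) → Sym2 (Fin (2 * g - 2)),
      MultigraphConnected ends ∧
      (∀ v : Fin (2 * g - 2), multigraphDeg ends v = 3) ∧
      (∀ v : Fin (2 * g - 2), 0 < 2 * ((0 : ℕ) : ℤ) - 2 + (multigraphDeg ends v : ℤ)) ∧
      (Fintype.card (Fin (3 * g - 3)) : ℤ) - (Fintype.card (Fin (2 * g - 2)) : ℤ) + 1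
          + ∑ _v : Fin (2 * g - 2), ((0 : ℕ) : ℤ) = g := by
  have : NeZero (2 * g - 2) := ⟨by omega⟩
  have hm : (g - 1) + (g - 1) = 2 * g - 2 := by omega
  let σ : Fin (3 * g - 3) ≃ Fin (2 * g - 2) ⊕ Fin (g - 1) :=
    (finCongr (by omega)).trans finSumFinEquiv.symm
  have hdeg (v : Fin (2 * g - 2)) : multigraphDeg (cycleWithMatchingEnds hm ∘ σ) v = 3 := by
    rw [multigraphDeg_comp_equiv, multigraphDeg_cycleWithMatchingEnds]
  refine ⟨cycleWithMatchingEnds hm ∘ σ, (cycleWithMatchingEnds_connected hm).comp_equiv σ,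
    hdeg, fun v => by simp [hdeg], ?_⟩
  simp only [Fintype.card_fin, sum_const, Nat.cast_zero, smul_zero, add_zero]
  omega
end

section
/- There are exactly 51 functions c : {1,2,3,4} → {1,2,3,4} with c(v) ≠ v for all v for which there exists M : Edges(K4) → ℝ with M(e) > 0 for all edges e such that, for every vertex v and every u with u ≠ v and u ≠ c(v), one has M({v, c(v)}) < M({v, u}). -/
/-- The edges of the complete graph `K4` on the vertex set `Fin 4`: the six
2-element subsets of the vertices. -/
def K4Edge : Type := {e : Finset (Fin 4) // e.card = 2}

instance : Fintype K4Edge := Subtype.fintype _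

/-!
A map `c` without fixed points is realised by a metric exactly when every periodic point of `c`
has period `2`, i.e. the functional graph of `c` has no cycle of length at least `3`. Along such a
cycle `v → c v → c² v → ⋯` each selected edge `{cⁱ⁺¹ v, cⁱ⁺² v}` is strictly lighter than the
edge `{cⁱ v, cⁱ⁺¹ v}` before it, which cannot close up. Conversely, giving the edge `{w, c w}` the
weight one plus the larger distance of its endpoints to the periodic points, and every other edge
a larger weight, realises `c`. Among the `3⁴` fixed-point-free self-maps of `Fin 4` exactly
`81 - 24 - 6 = 51` have only `2`-cycles.
-/

namespace Function

variable {α : Type*} {f : α → α} {x : α}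

theorem exists_iterate_mem_periodicPts [Finite α] (f : α → α) (x : α) :
    ∃ n, f^[n] x ∈ periodicPts f := by
  obtain ⟨m, n, heq, hne⟩ : ∃ m n, f^[m] x = f^[n] x ∧ m ≠ n := by
    simpa [Injective] using not_injective_infinite_finite (f^[·] x)
  wlog hlt : m < n generalizing m n
  · exact this n m heq.symm hne.symm (by lia)
  refine ⟨m, mk_mem_periodicPts (n := n - m) (by lia) ?_⟩
  rw [IsPeriodicPt, IsFixedPt, ← iterate_add_apply, Nat.sub_add_cancel hlt.le, heq]

open Classical in
noncomputable def periodicDepth [Finite α] (f : α → α) (x : α) : ℕ :=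
  Nat.find (exists_iterate_mem_periodicPts f x)

variable [Finite α]

theorem periodicDepth_eq_zero_iff : periodicDepth f x = 0 ↔ x ∈ periodicPts f := by
  simp [periodicDepth]

open Classical in
theorem periodicDepth_eq_succ (hx : x ∉ periodicPts f) :
    periodicDepth f x = periodicDepth f (f x) + 1 := by
  unfold periodicDepth
  exact Nat.find_comp_succ _ _ hx

theorem periodicDepth_apply_le (f : α → α) (x : α) :
    periodicDepth f (f x) ≤ periodicDepth f x := by
  by_cases hx : x ∈ periodicPts f
  · simp [periodicDepth_eq_zero_iff.2 ((bijOn_periodicPts f).mapsTo hx)]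
  · rw [periodicDepth_eq_succ hx]
    exact Nat.le_succ _

end Function

open Function Finset

variable {V : Type*} [DecidableEq V]

def IsChamberFunction (c : V → V) : Prop :=
  ∃ M : {e : Finset V // e.card = 2} → ℝ, (∀ e, 0 < M e) ∧
    ∀ v u : V, u ≠ v → u ≠ c v →
      ∀ e e' : {e : Finset V // e.card = 2}, e.val = {v, c v} → e'.val = {v, u} → M e < M e'

theorem IsChamberFunction.isPeriodicPt_two {c : V → V} (hc : IsChamberFunction c) {v : V}
    (hv : v ∈ periodicPts c) : IsPeriodicPt c 2 v := by
  by_contra hv2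
  obtain ⟨M, -, hM⟩ := hc
  have hx2 (i : ℕ) : ¬IsPeriodicPt c 2 (c^[i] v) := fun h ↦
    hv2 (isPeriodicPt_of_mem_periodicPts_of_isPeriodicPt_iterate hv h)
  have hne1 (i : ℕ) : c^[i] v ≠ c^[i + 1] v := by
    rw [iterate_succ_apply']
    exact fun h ↦ hx2 i (IsFixedPt.isPeriodicPt h.symm 2)
  have hne2 (i : ℕ) : c^[i] v ≠ c^[i + 2] v := by
    rw [add_comm, iterate_add_apply]
    exact fun h ↦ hx2 i h.symm
  let E (i : ℕ) : {e : Finset V // e.card = 2} := ⟨{c^[i] v, c^[i + 1] v}, card_pair (hne1 i)⟩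
  -- At `c^[i + 1] v` the selected edge `E (i + 1)` beats the edge `E i` back to `c^[i] v`.
  have hstep (i : ℕ) : M (E (i + 1)) < M (E i) :=
    hM _ _ (hne1 i) (by rw [← iterate_succ_apply' c]; exact hne2 i) _ _
      (by simp only [E, iterate_succ_apply']) (pair_comm _ _)
  obtain ⟨n, hn, hper⟩ := hv
  have hEn : E n = E 0 := Subtype.ext <| by
    simp only [E, iterate_succ_apply', hper.eq, iterate_zero_apply]
  exact (strictAnti_nat_of_succ_lt (f := fun i ↦ M (E i)) hstep hn).ne (congrArg M hEn)

theorem eq_apply_of_pair_eq_pair {c : V → V} {v u w : V} (hu : u ≠ c v)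
    (h : ({v, u} : Finset V) = {w, c w}) : v = c u := by
  rw [← coe_inj, coe_pair, coe_pair, Set.pair_eq_pair_iff] at h
  rcases h with ⟨rfl, rfl⟩ | ⟨rfl, rfl⟩
  · exact absurd rfl hu
  · rfl

section Construction

variable [Fintype V] (c : V → V)

open Classical in
noncomputable def depthWeight (e : Finset V) : ℕ :=
  if ∃ w, e = {w, c w} then e.sup (periodicDepth c) + 1 else univ.sup (periodicDepth c) + 2

theorem depthWeight_pos (e : Finset V) : 0 < depthWeight c e := by
  unfold depthWeight
  split_ifs <;> lia

theorem depthWeight_pair_apply (v : V) : depthWeight c {v, c v} = periodicDepth c v + 1 := by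
  rw [depthWeight, if_pos ⟨v, rfl⟩, sup_insert, sup_singleton,
    sup_eq_left.2 (periodicDepth_apply_le c v)]

theorem add_two_le_depthWeight (h2 : ∀ v ∈ periodicPts c, IsPeriodicPt c 2 v) {v u : V}
    (hu : u ≠ c v) : periodicDepth c v + 2 ≤ depthWeight c {v, u} := by
  unfold depthWeight
  split_ifs with hedge
  · obtain ⟨w, hw⟩ := hedge
    have hvu : v = c u := eq_apply_of_pair_eq_pair hu hw
    -- a periodic `u` would be 2-periodic, forcing `u = c (c u) = c v`
    have hu_per : u ∉ periodicPts c := fun hper ↦ hu (hvu ▸ (h2 u hper).eq.symm)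
    have := le_sup (f := periodicDepth c) (mem_insert_of_mem (mem_singleton_self u) :
      u ∈ ({v, u} : Finset V))
    rw [periodicDepth_eq_succ hu_per, ← hvu] at this
    lia
  · have := le_sup (f := periodicDepth c) (mem_univ v)
    lia

theorem isChamberFunction_of_forall_isPeriodicPt_two
    (h2 : ∀ v ∈ periodicPts c, IsPeriodicPt c 2 v) : IsChamberFunction c := by
  refine ⟨fun e ↦ depthWeight c e.val, fun e ↦ Nat.cast_pos.2 (depthWeight_pos c e.val), ?_⟩
  intro v u _ hu e e' he he'
  have := add_two_le_depthWeight c h2 hu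
  dsimp only
  rw [he, he', Nat.cast_lt, depthWeight_pair_apply]
  lia

end Construction

theorem isChamberFunction_iff [Fintype V] {c : V → V} :
    IsChamberFunction c ↔ ∀ v ∈ periodicPts c, IsPeriodicPt c 2 v :=
  ⟨fun hc _ ↦ hc.isPeriodicPt_two, isChamberFunction_of_forall_isPeriodicPt_two c⟩

set_option maxRecDepth 10000 in
theorem card_fin_four_fixedPointFree_all_cycles_length_two :
    Fintype.card {c : Fin 4 → Fin 4 // (∀ v, c v ≠ v) ∧ ∀ v, c^[24] v = v → c^[2] v = v} = 51 := by
  decide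

/-- There are exactly `51` functions `c` on the vertices of `K4` with `c v ≠ v` for all
`v` such that some metric `M` on `K4` makes the edge `{v, c v}` the unique minimum of
`M` among the three edges incident to `v`, for every vertex `v`: these index the `51`
open chambers of the cone of metrics on `K4`. -/
theorem fiftyone_chamber_functions :
    Nat.card {c : Fin 4 → Fin 4 // (∀ v, c v ≠ v) ∧
      ∃ M : K4Edge → ℝ, (∀ e : K4Edge, 0 < M e) ∧
        ∀ v u : Fin 4, u ≠ v → u ≠ c v →
          ∀ e e' : K4Edge, e.val = {v, c v} → e'.val = {v, u} → M e < M e'} = 51 := by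
  change Nat.card {c : Fin 4 → Fin 4 // (∀ v, c v ≠ v) ∧ IsChamberFunction c} = 51
  -- on `Fin 4` a point is periodic iff it is fixed by `c^[4!]`, which makes the condition decidable
  have key (c : Fin 4 → Fin 4) : IsChamberFunction c ↔ ∀ v, c^[24] v = v → c^[2] v = v := by
    simp only [isChamberFunction_iff, mem_periodicPts_iff_isPeriodicPt_factorial_card,
      Fintype.card_fin]
    rfl
  rw [Nat.card_congr (Equiv.subtypeEquivRight fun c ↦ and_congr_right fun _ ↦ key c),
    Nat.card_eq_fintype_card]
  exact card_fin_four_fixedPointFree_all_cycles_length_two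
end
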